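/- arXiv:1411.7260 — 3 statements merged into one kernel-verified Lean document; each statement's English description precedes it below -/
import Mathlib

section
/- Let n ≥ 1, let λ : {1,…,n} → ℤ be strictly decreasing (λ₁ > λ₂ > … > λₙ), let w be a permutation of {1,…,n} with w ≠ id, and let I ⊆ {1,…,n−1} be a set of indices such that for every i ∈ I one has λ_{w⁻¹(i)} > λ_{w⁻¹(i+1)}. Then there exists an index i ∈ {1,…,n−1} with i ∉ I such that ∑_{j=1}^{i} (λ_{w⁻¹(j)} − λ_j) ≤ − min_{1≤k≤n−1} (λ_k − λ_{k+1}). -/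
/-!
Put `u = w⁻¹`. If `u` mapped every initial segment `Iic i` with `i ∉ I` onto itself, then
`u` would be increasing across each such `i` (it keeps `Iic i` and hence its complement), and it
is increasing across each `i ∈ I` by the dominance hypothesis; so `u` would be strictly monotone,
hence the identity. Thus some `Iic i` with `i ∉ I` is not stable under `u`. Comparing
`∑_{j ≤ i} λ (u j)` with `∑_{j ≤ i} λ j`, the terms that differ are the same number `m ≥ 1` of
values `λ x` with `x > i` and `λ y` with `y ≤ i`, each pair differing by at least
`λ i - λ (i + 1)`.
-/

open Finset

namespace Equiv.Perm

section Sum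

variable {α β : Type*} [DecidableEq α] [AddCommGroup β] [LinearOrder β] [IsOrderedAddMonoid β]

theorem sum_apply_sub_le_neg_of_image_ne (u : Perm α) {T : Finset α} (hT : T.image u ≠ T)
    {f : α → β} {c g : β} (hg : 0 ≤ g) (hout : ∀ x ∉ T, f x + g ≤ c)
    (hin : ∀ y ∈ T, c ≤ f y) : ∑ j ∈ T, (f (u j) - f j) ≤ -g := by
  set S := T.image u
  have hcard : #S = #T := card_image_of_injective T u.injective
  have hm : 0 < #(T \ S) :=
    card_pos.2 (sdiff_nonempty.2 fun hTS => hT (eq_of_subset_of_card_le hTS hcard.le).symm)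
  have hsum : ∑ j ∈ T, (f (u j) - f j) = ∑ x ∈ S \ T, f x - ∑ y ∈ T \ S, f y := by
    rw [sum_sub_distrib, ← sum_image fun a _ b _ h => u.injective h,
      ← sum_inter_add_sum_sdiff S T, ← sum_inter_add_sum_sdiff T S, inter_comm]
    abel
  have hout : ∑ x ∈ S \ T, f x + #(T \ S) • g ≤ #(T \ S) • c := by
    rw [← card_sdiff_comm hcard, ← sum_const, ← sum_add_distrib]
    exact sum_le_card_nsmul _ _ _ fun x hx => hout x (mem_sdiff.1 hx).2
  have hin : #(T \ S) • c ≤ ∑ y ∈ T \ S, f y :=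
    card_nsmul_le_sum _ _ _ fun y hy => hin y (mem_sdiff.1 hy).1
  have hg : g ≤ #(T \ S) • g := le_self_nsmul hg hm.ne'
  rw [hsum, sub_le_iff_le_add, neg_add_eq_sub, le_sub_iff_add_le]
  exact (add_le_add_right hg _).trans (hout.trans hin)

end Sum

section Order

variable {α : Type*} [LinearOrder α]

theorem eq_one_of_strictMono [WellFoundedLT α] {u : Perm α} (hu : StrictMono u) : u = 1 :=
  Equiv.ext fun x =>
    congr($(Subsingleton.elim (hu.orderIsoOfSurjective u u.surjective) (OrderIso.refl α)) x)

variable [LocallyFiniteOrderBot α] {u : Perm α} {a b : α}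

theorem lt_apply_of_image_Iic_eq (h : (Iic a).image u = Iic a) (hb : a < b) : a < u b := by
  by_contra! hub
  obtain ⟨c, hc, hcb⟩ := mem_image.1 (h.symm ▸ mem_Iic.2 hub : u b ∈ (Iic a).image u)
  exact (u.injective hcb ▸ hb).not_ge (mem_Iic.1 hc)

theorem apply_lt_apply_of_covBy_of_image_Iic_eq (h : (Iic a).image u = Iic a) (hab : a ⋖ b) :
    u a < u b :=
  (mem_Iic.1 (h ▸ mem_image_of_mem u (mem_Iic.2 le_rfl))).trans_lt
    (lt_apply_of_image_Iic_eq h hab.lt)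

theorem exists_covBy_image_Iic_ne [LocallyFiniteOrder α] [WellFoundedLT α] (hu : u ≠ 1)
    {P : α → Prop} (hP : ∀ a b, a ⋖ b → P a → u a < u b) :
    ∃ a b, a ⋖ b ∧ ¬ P a ∧ (Iic a).image u ≠ Iic a := by
  by_contra! h
  refine hu (eq_one_of_strictMono ((strictMono_iff_forall_covBy u).2 fun a b hab => ?_))
  by_cases ha : P a
  · exact hP a b hab ha
  · exact apply_lt_apply_of_covBy_of_image_Iic_eq (h a b hab ha) hab

theorem sum_apply_sub_le_of_image_Iic_ne {β : Type*} [AddCommGroup β] [LinearOrder β]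
    [IsOrderedAddMonoid β] {f : α → β} (hf : Antitone f) (hab : a ⋖ b)
    (hu : (Iic a).image u ≠ Iic a) : ∑ j ∈ Iic a, (f (u j) - f j) ≤ f b - f a := by
  rw [← neg_sub]
  refine sum_apply_sub_le_neg_of_image_ne u hu (sub_nonneg.2 (hf hab.le)) (fun x hx => ?_)
    fun y hy => hf (mem_Iic.1 hy)
  rw [← le_sub_iff_add_le, sub_sub_cancel]
  exact hf (hab.ge_of_gt (not_le.1 (mem_Iic.not.1 hx)))

end Order

end Equiv.Perm

theorem stmt0_general (n : ℕ) (lam : Fin n → ℤ) (hlam : StrictAnti lam)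
    (w : Equiv.Perm (Fin n)) (hw : w ≠ 1)
    (I : Set ℕ)
    (hdom : ∀ i : ℕ, ∀ hi : i + 1 < n, i ∈ I →
      lam (w⁻¹ ⟨i, Nat.lt_of_succ_lt hi⟩) > lam (w⁻¹ ⟨i + 1, hi⟩)) :
    ∃ i : ℕ, ∃ _ : i + 1 < n, i ∉ I ∧
      (∑ j ∈ Finset.univ.filter (fun j : Fin n => (j : ℕ) ≤ i),
          (lam (w⁻¹ j) - lam j)) ≤
        - sInf {d : ℤ | ∃ k : ℕ, ∃ hk : k + 1 < n,
            d = lam ⟨k, Nat.lt_of_succ_lt hk⟩ - lam ⟨k + 1, hk⟩} := by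
  have hdom' : ∀ a b : Fin n, a ⋖ b → (a : ℕ) ∈ I → w⁻¹ a < w⁻¹ b := by
    rintro ⟨i, _⟩ ⟨j, hj⟩ hab hi
    obtain rfl : i + 1 = j := Nat.covBy_iff_add_one_eq.1 (Fin.covBy_iff.1 hab)
    exact hlam.lt_iff_gt.1 (hdom i hj hi)
  obtain ⟨⟨i, hi⟩, ⟨j, hj⟩, hab, hiI, hne⟩ :=
    Equiv.Perm.exists_covBy_image_Iic_ne (inv_ne_one.2 hw) hdom'
  obtain rfl : i + 1 = j := Nat.covBy_iff_add_one_eq.1 (Fin.covBy_iff.1 hab)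
  have hIic : Finset.univ.filter (fun j : Fin n => (j : ℕ) ≤ i) = Finset.Iic ⟨i, hi⟩ := by
    ext; simp [Fin.le_def]
  have hbdd : BddBelow {d : ℤ | ∃ k : ℕ, ∃ hk : k + 1 < n,
      d = lam ⟨k, Nat.lt_of_succ_lt hk⟩ - lam ⟨k + 1, hk⟩} :=
    ⟨0, by rintro _ ⟨k, hk, rfl⟩; exact sub_nonneg.2 (hlam.antitone (Fin.mk_le_mk.2 k.le_succ))⟩
  refine ⟨i, hj, hiI, ?_⟩
  rw [hIic]
  calc _ ≤ lam ⟨i + 1, hj⟩ - lam ⟨i, hi⟩ :=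
        Equiv.Perm.sum_apply_sub_le_of_image_Iic_ne hlam.antitone hab hne
    _ = -(lam ⟨i, hi⟩ - lam ⟨i + 1, hj⟩) := (neg_sub _ _).symm
    _ ≤ _ := neg_le_neg (csInf_le hbdd ⟨i, hj, rfl⟩)

/-- Root-system lemma (type A, one embedding), 0-indexed: indices `i` with
`i + 1 < n` correspond to the simple roots `α_{i+1}` of `GL_n`. -/
theorem stmt0 (n : ℕ) (hn : 1 ≤ n) (lam : Fin n → ℤ) (hlam : StrictAnti lam)
    (w : Equiv.Perm (Fin n)) (hw : w ≠ 1)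
    (I : Set ℕ) (hI : ∀ i ∈ I, i + 1 < n)
    (hdom : ∀ i : ℕ, ∀ hi : i + 1 < n, i ∈ I →
      lam (w⁻¹ ⟨i, Nat.lt_of_succ_lt hi⟩) > lam (w⁻¹ ⟨i + 1, hi⟩)) :
    ∃ i : ℕ, ∃ _ : i + 1 < n, i ∉ I ∧
      (∑ j ∈ Finset.univ.filter (fun j : Fin n => (j : ℕ) ≤ i),
          (lam (w⁻¹ j) - lam j)) ≤
        - sInf {d : ℤ | ∃ k : ℕ, ∃ hk : k + 1 < n,
            d = lam ⟨k, Nat.lt_of_succ_lt hk⟩ - lam ⟨k + 1, hk⟩} :=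
  stmt0_general n lam hlam w hw I hdom
end

section
/- Let (A, m) be a Noetherian local integral domain and let B be a commutative A-algebra which, as an A-module, is isomorphic to a submodule of a finite free A-module A^r. Then: (1) B is a finitely generated A-module; (2) for every associated prime q of B (as a B-module over itself), dim(B/q) = dim(A); in particular all associated primes of B are minimal, B is equidimensional of dimension dim A, and B has no embedded primes. -/
/-! Since `B` embeds `A`-linearly into `A^r`, it is a finite torsion-free `A`-module, hence
integral over `A` and a Noetherian ring. If `q = √(0 : x)` is an associated prime of `B` and
`a ∈ A` lies in `q`, then `a ^ n • x = 0` with `x ≠ 0`, so torsion-freeness forces `a = 0`: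
`q` lies over `(0)`. Thus `B ⧸ q` is an integral extension of `A`, and going-up together with
incomparability give `dim (B ⧸ q) = dim A`; incomparability also makes `q` minimal. Conversely,
minimal primes of a Noetherian ring are associated. -/

open Ideal

theorem ringKrullDim_eq_of_isIntegral (R S : Type*) [CommRing R] [CommRing S] [Algebra R S]
    [Algebra.IsIntegral R S] [FaithfulSMul R S] : ringKrullDim S = ringKrullDim R := by
  apply le_antisymm
  · exact Order.krullDim_le_of_strictMono (PrimeSpectrum.comap (algebraMap R S))
      fun _ _ h ↦ IsIntegral.comap_lt_comap (R := R) h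
  · refine iSup_le fun l ↦ ?_
    obtain ⟨⟨P, _, _⟩⟩ := nonempty_primesOver (S := S) l.head.asIdeal
    obtain ⟨L, hL, -⟩ := exists_ltSeries_of_hasGoingUp l P
    exact le_sSup ⟨L, congrArg Nat.cast hL⟩

theorem ringKrullDim_quotient_eq_of_comap_eq_bot {A B : Type*} [CommRing A] [CommRing B]
    [Algebra A B] [Algebra.IsIntegral A B] {I : Ideal B} (hI : I.comap (algebraMap A B) = ⊥) :
    ringKrullDim (B ⧸ I) = ringKrullDim A := by
  have : FaithfulSMul A (B ⧸ I) := by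
    rw [faithfulSMul_iff_algebraMap_injective, injective_iff_map_eq_zero]
    intro a ha
    rw [← mem_bot, ← hI, mem_comap, ← Quotient.eq_zero_iff_mem]
    exact ha
  exact ringKrullDim_eq_of_isIntegral A (B ⧸ I)

theorem Ideal.comap_eq_bot_of_mem_associatedPrimes {A B M : Type*} [CommRing A] [IsDomain A]
    [CommRing B] [Algebra A B] [AddCommGroup M] [Module A M] [Module B M] [IsScalarTower A B M]
    [Module.IsTorsionFree A M] {q : Ideal B} (hq : q ∈ associatedPrimes B M) :
    q.comap (algebraMap A B) = ⊥ := by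
  obtain ⟨hq, x, rfl⟩ := hq
  have hx : x ≠ 0 := by
    rintro rfl
    exact hq.ne_top <| eq_top_iff.mpr fun b _ ↦
      le_radical (by simp [Submodule.mem_colon_singleton])
  refine (Submodule.eq_bot_iff _).2 fun a ⟨n, hn⟩ ↦ eq_zero_of_pow_eq_zero (n := n) ?_
  rw [← map_pow, Submodule.mem_colon_singleton, Submodule.mem_bot, algebraMap_smul] at hn
  exact (smul_eq_zero_iff_left hx).mp hn

theorem Ideal.mem_minimalPrimes_of_comap_eq_bot {A B : Type*} [CommRing A] [CommRing B]
    [Algebra A B] [Algebra.IsIntegral A B] {q : Ideal B} [q.IsPrime]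
    (hq : q.comap (algebraMap A B) = ⊥) :
    q ∈ minimalPrimes B := by
  simpa [under, hq] using IsIntegral.mem_minimalPrimes_map_under (R := A) q

theorem minimalPrimes_subset_associatedPrimes (B : Type*) [CommRing B] [IsNoetherianRing B] :
    minimalPrimes B ⊆ associatedPrimes B B := by
  simpa [Module.annihilator_eq_bot.mpr inferInstance] using
    Module.associatedPrimes.minimalPrimes_annihilator_subset_associatedPrimes B B

theorem stmt8_general {A : Type*} [CommRing A] [IsNoetherianRing A]
    [IsDomain A] (B : Type*) [CommRing B] [Algebra A B]
    (r : ℕ) (f : B →ₗ[A] (Fin r → A)) (hf : Function.Injective f) :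
    Module.Finite A B ∧
    (∀ q ∈ associatedPrimes B B, ringKrullDim (B ⧸ q) = ringKrullDim A) ∧
    associatedPrimes B B ⊆ minimalPrimes B ∧
    (∀ p ∈ minimalPrimes B, ringKrullDim (B ⧸ p) = ringKrullDim A) := by
  have : Module.Finite A B := .of_injective f hf
  have : Module.IsTorsionFree A B := hf.moduleIsTorsionFree f (map_smul f)
  have : IsNoetherianRing B := .of_finite A B
  have hbot : ∀ q ∈ associatedPrimes B B, q.comap (algebraMap A B) = ⊥ := fun q hq ↦
    comap_eq_bot_of_mem_associatedPrimes hq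
  have hdim : ∀ q ∈ associatedPrimes B B, ringKrullDim (B ⧸ q) = ringKrullDim A :=
    fun q hq ↦ ringKrullDim_quotient_eq_of_comap_eq_bot (hbot q hq)
  refine ⟨‹_›, hdim, fun q hq ↦ ?_,
    fun p hp ↦ hdim p (minimalPrimes_subset_associatedPrimes B hp)⟩
  have := hq.isPrime
  exact mem_minimalPrimes_of_comap_eq_bot (hbot q hq)

theorem stmt8 {A : Type*} [CommRing A] [IsNoetherianRing A] [IsLocalRing A]
    [IsDomain A] (B : Type*) [CommRing B] [Algebra A B]
    (r : ℕ) (f : B →ₗ[A] (Fin r → A)) (hf : Function.Injective f) :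
    Module.Finite A B ∧
    (∀ q ∈ associatedPrimes B B, ringKrullDim (B ⧸ q) = ringKrullDim A) ∧
    associatedPrimes B B ⊆ minimalPrimes B ∧
    (∀ p ∈ minimalPrimes B, ringKrullDim (B ⧸ p) = ringKrullDim A) :=
  stmt8_general B r f hf
end

section
/- Let X be a locally Noetherian scheme such that for every point x ∈ X the local ring O_{X,x} has no embedded associated primes (i.e. every associated prime of O_{X,x} is a minimal prime). Assume furthermore that every irreducible component of X contains a point x such that O_{X,x} is reduced. Then X is reduced. -/
/-!
Let `a` be a nilpotent in `𝒪_{X,x}`. If `a ≠ 0`, its annihilator lies in an associated prime `P`,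
so `a` survives in `(𝒪_{X,x})_P`. By hypothesis `P` is minimal, so `(𝒪_{X,x})_P` is the stalk at
the generic point `η` of an irreducible component. That component contains a point `z` with
reduced stalk, and `𝒪_{X,η}` is a localization of `𝒪_{X,z}`, hence reduced: a contradiction.
-/

open AlgebraicGeometry Topology

universe u

theorem IsLocalization.AtPrime.isReduced_of_le {R : Type*} [CommRing R] {p q : Ideal R}
    [p.IsPrime] [q.IsPrime] (hpq : p ≤ q) (S T : Type u) [CommRing S] [CommRing T] [Algebra R S]
    [Algebra R T] [IsLocalization.AtPrime S q] [IsLocalization.AtPrime T p] [IsReduced S] :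
    IsReduced T := by
  have hle : q.primeCompl ≤ p.primeCompl := fun _ => mt (@hpq _)
  let := localizationAlgebraOfSubmonoidLe S T _ _ hle
  have := localization_isScalarTower_of_submonoid_le S T _ _ hle
  have := isLocalization_of_submonoid_le S T _ _ hle
  exact isReduced_localizationPreserves (p.primeCompl.map (algebraMap R S)) T inferInstance

theorem isReduced_of_associatedPrimes_isReduced_localization {R : Type*} [CommRing R]
    [IsNoetherianRing R]
    (h : ∀ (P : Ideal R) [P.IsPrime], P ∈ associatedPrimes R R →
      IsReduced (Localization.AtPrime P)) : IsReduced R := by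
  refine ⟨fun a ha => by_contra fun ha0 => ?_⟩
  obtain ⟨P, hP, hannP⟩ := exists_le_isAssociatedPrime_of_isNoetherianRing R a ha0
  have := hP.isPrime
  have := h P hP
  obtain ⟨m, hm⟩ := (IsLocalization.map_eq_zero_iff P.primeCompl _ _).mp
    (ha.map (algebraMap R (Localization.AtPrime P))).eq_zero
  exact m.2 (hannP (by simpa [Submodule.mem_colon_singleton] using hm))

theorem specializes_of_mem_irreducibleComponent {X : Type*} [TopologicalSpace X] [QuasiSober X]
    {y z : X} (hy : ∀ y', y' ⤳ y → y ⤳ y') (hz : z ∈ irreducibleComponent y) : y ⤳ z := by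
  have hgen := isIrreducible_irreducibleComponent.isGenericPoint_genericPoint
    (isClosed_irreducibleComponent (x := y))
  exact (hy _ (hgen.specializes mem_irreducibleComponent)).trans (hgen.specializes hz)

theorem Topology.IsOpenEmbedding.specializes_of_specializes_apply {X Y : Type*}
    [TopologicalSpace X] [TopologicalSpace Y] {f : X → Y} (hf : IsOpenEmbedding f) {x : X}
    (hx : ∀ x', x' ⤳ x → x ⤳ x') {y : Y} (hy : y ⤳ f x) : f x ⤳ y := by
  obtain ⟨x', rfl⟩ := hy.mem_open hf.isOpen_range (Set.mem_range_self x)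
  exact (hx x' (hf.isInducing.specializes_iff.mp hy)).map hf.continuous

theorem PrimeSpectrum.specializes_of_mem_minimalPrimes {R : Type*} [CommRing R]
    {p : PrimeSpectrum R} (hp : p.asIdeal ∈ minimalPrimes R) {q : PrimeSpectrum R} (h : q ⤳ p) :
    p ⤳ q := by
  rw [← PrimeSpectrum.le_iff_specializes] at h ⊢
  exact hp.2 ⟨q.2, bot_le⟩ h

namespace AlgebraicGeometry.Scheme

theorem isReduced_stalk_of_specializes {X : Scheme} {y z : X} (h : y ⤳ z)
    [_root_.IsReduced (X.presheaf.stalk z)] : _root_.IsReduced (X.presheaf.stalk y) := by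
  obtain ⟨_, ⟨U, (hU : IsAffineOpen U), rfl⟩, hzU, -⟩ :=
    X.isBasis_affineOpens.exists_subset_of_mem_open (Set.mem_univ z) isOpen_univ
  have hyU : y ∈ U := h.mem_open U.2 hzU
  let := X.presheaf.algebra_section_stalk ⟨y, hyU⟩
  let := X.presheaf.algebra_section_stalk ⟨z, hzU⟩
  have := hU.isLocalization_stalk ⟨y, hyU⟩
  have := hU.isLocalization_stalk ⟨z, hzU⟩
  have hle : hU.primeIdealOf ⟨y, hyU⟩ ≤ hU.primeIdealOf ⟨z, hzU⟩ := by
    rw [PrimeSpectrum.le_iff_specializes]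
    apply hU.fromSpec.isOpenEmbedding.isInducing.specializes_iff.mp
    rwa [hU.fromSpec_primeIdealOf, hU.fromSpec_primeIdealOf]
  exact IsLocalization.AtPrime.isReduced_of_le hle (X.presheaf.stalk z) (X.presheaf.stalk y)

theorem isReduced_localization_of_mem_minimalPrimes {X : Scheme}
    (h : ∀ Z ∈ irreducibleComponents X, ∃ z ∈ Z, _root_.IsReduced (X.presheaf.stalk z))
    {x : X} (P : Ideal (X.presheaf.stalk x)) [P.IsPrime] (hP : P ∈ minimalPrimes _) :
    _root_.IsReduced (Localization.AtPrime P) := by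
  obtain ⟨_, ⟨U, (hU : IsAffineOpen U), rfl⟩, hxU, -⟩ :=
    X.isBasis_affineOpens.exists_subset_of_mem_open (Set.mem_univ x) isOpen_univ
  let := X.presheaf.algebra_section_stalk ⟨x, hxU⟩
  have := hU.isLocalization_stalk ⟨x, hxU⟩
  let p : PrimeSpectrum Γ(X, U) :=
    ⟨P.comap (algebraMap Γ(X, U) (X.presheaf.stalk x)), inferInstance⟩
  have hp : p.asIdeal ∈ minimalPrimes Γ(X, U) := by
    have := IsLocalization.minimalPrimes_map (hU.primeIdealOf ⟨x, hxU⟩).asIdeal.primeCompl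
      (X.presheaf.stalk x) (⊥ : Ideal Γ(X, U))
    rw [Ideal.map_bot] at this
    exact (Set.ext_iff.mp this P).mp hP
  have hyU : hU.fromSpec p ∈ U := hU.range_fromSpec.le (Set.mem_range_self p)
  have hy : ∀ y', y' ⤳ hU.fromSpec p → hU.fromSpec p ⤳ y' := fun _ =>
    hU.fromSpec.isOpenEmbedding.specializes_of_specializes_apply
      (fun _ => PrimeSpectrum.specializes_of_mem_minimalPrimes hp)
  obtain ⟨z, hz, hzred⟩ := h _ (irreducibleComponent_mem_irreducibleComponents (hU.fromSpec p))
  have hyred := isReduced_stalk_of_specializes (specializes_of_mem_irreducibleComponent hy hz)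
  have := IsLocalization.isLocalization_isLocalization_atPrime_isLocalization
    (hU.primeIdealOf ⟨x, hxU⟩).asIdeal.primeCompl (Localization.AtPrime P) P
  -- `isLocalization_stalk'` is stated for its own algebra structure, so it is passed explicitly.
  exact @IsLocalization.AtPrime.isReduced_of_le _ _ _ _ _ _ le_rfl _ _ _ _
    (X.presheaf.algebra_section_stalk _) _ (hU.isLocalization_stalk' p hyU) _ hyred

end AlgebraicGeometry.Scheme

open AlgebraicGeometry in
theorem stmt14 (X : Scheme) [IsLocallyNoetherian X]
    (h1 : ∀ x : X, ∀ p ∈ associatedPrimes (X.presheaf.stalk x) (X.presheaf.stalk x),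
      p ∈ minimalPrimes (X.presheaf.stalk x))
    (h2 : ∀ Z ∈ irreducibleComponents X, ∃ x ∈ Z,
      _root_.IsReduced (X.presheaf.stalk x)) :
    AlgebraicGeometry.IsReduced X := by
  have (x : X) : _root_.IsReduced (X.presheaf.stalk x) :=
    isReduced_of_associatedPrimes_isReduced_localization fun P _ hP =>
      Scheme.isReduced_localization_of_mem_minimalPrimes h2 P (h1 x P hP)
  exact isReduced_of_isReduced_stalk X
end
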